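/- arXiv:1707.03798 — 2 statements merged into one kernel-verified Lean document; each statement's English description precedes it below -/
import Mathlib

section
/- Let ω ∈ ℂ with |ω| = 1 and let (λ_k) be a sequence in the open unit disk 𝔻 with λ_k → ω. Then the following are equivalent: (i) Im(ω̄ λ_k) = o(√(1 - |λ_k|²)) (subhorocyclic convergence); (ii) for every r ∈ (0,1), λ_k eventually lies in the horodisk H_r(ω) = {z ∈ ℂ : |z - (1-r)ω| < r}. -/
open Filter Complex ComplexConjugate Metric Topology

/-!
Rotating by `ω̄` moves `ω` to `1`, so write `x = 1 - Re w`, `y = Im w` for the rotated point `w`.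
Then `1 - |w|² = 2x - x² - y²` and `w ∈ H_r(1)` iff `x² + y² < 2rx`.
If `y² ≤ (r/2)(1 - |w|²) ≤ rx` and `x < r`, then `x² + y² < 2rx`; conversely `x² + y² < 2rx`
gives `(1 - r) y² < r (1 - |w|²)`, and `r / (1 - r)` can be made as small as we like.
-/

def horodisk (ω : ℂ) (r : ℝ) : Set ℂ := ball ((1 - r) * ω) r

theorem mem_horodisk {ω z : ℂ} {r : ℝ} : z ∈ horodisk ω r ↔ ‖z - (1 - r) * ω‖ < r :=
  mem_ball_iff_norm

theorem conj_mul_mem_horodisk_one_iff {ω z : ℂ} (hω : ‖ω‖ = 1) (r : ℝ) :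
    conj ω * z ∈ horodisk 1 r ↔ z ∈ horodisk ω r := by
  have hconj : conj ω * ω = 1 := by rw [conj_mul', hω]; norm_num
  have hrot : conj ω * z - (1 - r) * 1 = conj ω * (z - (1 - r) * ω) := by
    linear_combination (1 - (r : ℂ)) * hconj
  rw [mem_horodisk, mem_horodisk, hrot, norm_mul, norm_conj, hω, one_mul]

theorem one_sub_norm_sq_eq (w : ℂ) :
    1 - ‖w‖ ^ 2 = 2 * (1 - w.re) - (1 - w.re) ^ 2 - w.im ^ 2 := by
  rw [Complex.sq_norm, normSq_apply]; ring

theorem mem_horodisk_one_iff {w : ℂ} {r : ℝ} (hr : 0 ≤ r) :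
    w ∈ horodisk 1 r ↔ (1 - w.re) ^ 2 + w.im ^ 2 < 2 * r * (1 - w.re) := by
  have hnorm :
      ‖w - (1 - r) * 1‖ ^ 2 = (1 - w.re) ^ 2 + w.im ^ 2 - 2 * r * (1 - w.re) + r ^ 2 := by
    rw [Complex.sq_norm, normSq_apply]
    simp only [mul_one, sub_re, one_re, ofReal_re, sub_im, one_im, ofReal_im, sub_self, sub_zero]
    ring
  rw [mem_horodisk, ← sq_lt_sq₀ (norm_nonneg _) hr, hnorm]
  constructor <;> intro h <;> linarith

theorem im_sq_lt_of_mem_horodisk_one {w : ℂ} {r : ℝ} (hr : r < 1) (hw : w ∈ horodisk 1 r) :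
    (1 - r) * w.im ^ 2 < r * (1 - ‖w‖ ^ 2) := by
  have hr₀ : 0 ≤ r := (norm_nonneg _).trans (mem_horodisk.1 hw).le
  rw [mem_horodisk_one_iff hr₀] at hw
  rw [one_sub_norm_sq_eq]
  nlinarith [sq_nonneg w.im, sq_nonneg (1 - w.re)]

theorem mem_horodisk_one_of_im_sq_le {w : ℂ} {r : ℝ} (hw : ‖w‖ < 1) (hre : 1 - r < w.re)
    (him : w.im ^ 2 ≤ r / 2 * (1 - ‖w‖ ^ 2)) : w ∈ horodisk 1 r := by
  have hx : 0 < 1 - w.re := by linarith [re_le_norm w]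
  rw [mem_horodisk_one_iff (by linarith)]
  rw [one_sub_norm_sq_eq] at him
  nlinarith [sq_nonneg w.im, sq_nonneg (1 - w.re)]

theorem tendsto_div_sqrt_nhds_zero_iff {ι : Type*} {L : Filter ι} {y s : ι → ℝ}
    (hs : ∀ i, 0 < s i) :
    Tendsto (fun i => y i / √(s i)) L (𝓝 0) ↔ ∀ ε > 0, ∀ᶠ i in L, y i ^ 2 < ε * s i := by
  have key : ∀ i, ∀ ε > 0, ‖y i / √(s i)‖ < ε ↔ y i ^ 2 < ε ^ 2 * s i := fun i ε hε => by
    have hsqrt : 0 < √(s i) := Real.sqrt_pos.2 (hs i)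
    have hmul : ε * √(s i) = √(ε ^ 2 * s i) := by
      rw [Real.sqrt_mul (sq_nonneg ε), Real.sqrt_sq hε.le]
    rw [Real.norm_eq_abs, abs_div, abs_of_pos hsqrt, div_lt_iff₀ hsqrt, hmul,
      Real.lt_sqrt (abs_nonneg _), sq_abs]
  rw [NormedAddGroup.tendsto_nhds_zero]
  constructor
  · intro h ε hε
    filter_upwards [h √ε (Real.sqrt_pos.2 hε)] with i hi
    rwa [key i _ (Real.sqrt_pos.2 hε), Real.sq_sqrt hε.le] at hi
  · intro h ε hε
    filter_upwards [h (ε ^ 2) (by positivity)] with i hi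
    exact (key i ε hε).2 hi

theorem tendsto_im_div_sqrt_iff_eventually_mem_horodisk_one {ι : Type*} {L : Filter ι}
    {w : ι → ℂ} (hw : ∀ i, ‖w i‖ < 1) (hre : Tendsto (fun i => (w i).re) L (𝓝 1)) :
    Tendsto (fun i => (w i).im / √(1 - ‖w i‖ ^ 2)) L (𝓝 0) ↔
      ∀ r : ℝ, 0 < r → r < 1 → ∀ᶠ i in L, w i ∈ horodisk 1 r := by
  have hs : ∀ i, 0 < 1 - ‖w i‖ ^ 2 := fun i => by
    nlinarith [hw i, norm_nonneg (w i)]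
  rw [tendsto_div_sqrt_nhds_zero_iff hs]
  constructor
  · intro h r hr _
    filter_upwards [h (r / 2) (half_pos hr), hre.eventually_const_lt (sub_lt_self 1 hr)]
      with i him hre
    exact mem_horodisk_one_of_im_sq_le (hw i) hre him.le
  · intro h ε hε
    have hrε : ε / (1 + ε) = (1 - ε / (1 + ε)) * ε := by field_simp; ring
    set r := ε / (1 + ε)
    have hr : 0 < r := by positivity
    have hr1 : r < 1 := (div_lt_one (by positivity)).2 (lt_one_add ε)
    filter_upwards [h r hr hr1] with i hi
    have hlt : (1 - r) * (w i).im ^ 2 < (1 - r) * (ε * (1 - ‖w i‖ ^ 2)) := by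
      rw [← mul_assoc, ← hrε]
      exact im_sq_lt_of_mem_horodisk_one hr1 hi
    exact lt_of_mul_lt_mul_left hlt (sub_pos.2 hr1).le

/-- For `|ω| = 1` and a sequence `λ_k` in the open unit disk converging to `ω`,
subhorocyclic convergence `Im(ω̄ λ_k) = o(√(1 - |λ_k|²))` is equivalent to the
sequence eventually entering every horodisk `{z : |z - (1-r)ω| < r}`, `0 < r < 1`. -/
theorem stmt8 (ω : ℂ) (hω : ‖ω‖ = 1) (l : ℕ → ℂ)
    (hl : ∀ k, ‖l k‖ < 1) (hconv : Tendsto l atTop (nhds ω)) :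
    Tendsto (fun k => ((starRingEnd ℂ) ω * l k).im / Real.sqrt (1 - ‖l k‖ ^ 2))
        atTop (nhds 0)
      ↔ ∀ r : ℝ, 0 < r → r < 1 →
          ∀ᶠ k in atTop, ‖l k - (1 - r) * ω‖ < r := by
  have hnorm : ∀ k, ‖l k‖ = ‖conj ω * l k‖ := fun k => by rw [norm_mul, norm_conj, hω, one_mul]
  have hre : Tendsto (fun k => (conj ω * l k).re) atTop (𝓝 1) := by
    have := (continuous_re.tendsto _).comp (hconv.const_mul (conj ω))
    rw [conj_mul', hω] at this
    simpa [Function.comp_def] using this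
  simp only [hnorm, ← mem_horodisk, ← conj_mul_mem_horodisk_one_iff hω]
  exact tendsto_im_div_sqrt_iff_eventually_mem_horodisk_one (fun k => hnorm k ▸ hl k) hre
end

section
/- Koenigs linearization: let λ ∈ ℂ with 0 < |λ| < 1 and let P_λ(z) = λz + z². Then there exists an open neighborhood U of 0 and a holomorphic function φ: U → ℂ with φ(0) = 0, φ'(0) = 1, and φ(P_λ(z)) = λ φ(z) for all z ∈ U with P_λ(z) ∈ U. Moreover φ can be obtained as the locally uniform limit φ(z) = lim_{n→∞} P_λⁿ(z)/λⁿ on a sufficiently small neighborhood of 0. -/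
/-!
On a small disc `|z| ≤ r` the map `P z = λz + z²` contracts by `c = |λ| + r`, so `|Pⁿ z| ≤ cⁿ r`.
Writing `Pⁿ z / λⁿ` as `z` plus the telescoping sum of `(P w - λ w) / λⁿ⁺¹ = w² / λⁿ⁺¹` at
`w = Pⁿ z`, the terms are bounded by `r² / |λ| · (c² / |λ|)ⁿ`, which is summable once `c² < |λ|`.
The uniform limit `φ` is holomorphic by Weierstrass, `φ'(0) = 1` because every `Pⁿ / λⁿ` has
derivative `1` at the fixed point `0`, and `φ ∘ P = λ φ` by shifting the index of the limit.
-/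

open Filter Metric Topology

theorem norm_iterate_le_pow_mul {E : Type*} [SeminormedAddCommGroup E] {P : E → E} {c r : ℝ}
    (hc0 : 0 ≤ c) (hc1 : c ≤ 1) (hP : ∀ w, ‖w‖ ≤ r → ‖P w‖ ≤ c * ‖w‖) {z : E} (hz : ‖z‖ ≤ r) :
    ∀ n : ℕ, ‖P^[n] z‖ ≤ c ^ n * ‖z‖
  | 0 => by simp
  | n + 1 => by
    have ih := norm_iterate_le_pow_mul hc0 hc1 hP hz n
    have hn : ‖P^[n] z‖ ≤ r :=
      (ih.trans (mul_le_of_le_one_left (norm_nonneg z) (pow_le_one₀ hc0 hc1))).trans hz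
    rw [Function.iterate_succ_apply', pow_succ', mul_assoc]
    exact (hP _ hn).trans (mul_le_mul_of_nonneg_left ih hc0)

section Koenigs

variable {𝕜 : Type*} [NormedField 𝕜] {P : 𝕜 → 𝕜} {lam : 𝕜}

theorem iterate_div_pow_eq_add_sum (h0 : lam ≠ 0) (z : 𝕜) (N : ℕ) :
    P^[N] z / lam ^ N =
      z + ∑ n ∈ Finset.range N, (P (P^[n] z) - lam * P^[n] z) / lam ^ (n + 1) := by
  have hstep : ∀ n, (P (P^[n] z) - lam * P^[n] z) / lam ^ (n + 1) =
      P^[n + 1] z / lam ^ (n + 1) - P^[n] z / lam ^ n := by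
    intro n
    rw [Function.iterate_succ_apply', pow_succ]
    field_simp
  rw [Finset.sum_congr rfl fun n _ => hstep n,
    Finset.sum_range_sub (fun n => P^[n] z / lam ^ n)]
  simp

theorem tendstoUniformlyOn_iterate_div_pow [CompleteSpace 𝕜] {K c r : ℝ} (h0 : lam ≠ 0)
    (hK : 0 ≤ K) (hc0 : 0 ≤ c) (hc1 : c ≤ 1) (hc : c ^ 2 < ‖lam‖)
    (hPc : ∀ w, ‖w‖ ≤ r → ‖P w‖ ≤ c * ‖w‖)
    (hPK : ∀ w, ‖w‖ ≤ r → ‖P w - lam * w‖ ≤ K * ‖w‖ ^ 2) :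
    TendstoUniformlyOn (fun n z => P^[n] z / lam ^ n)
      (fun z => z + ∑' n, (P (P^[n] z) - lam * P^[n] z) / lam ^ (n + 1)) atTop
      (closedBall 0 r) := by
  have hlam : 0 < ‖lam‖ := norm_pos_iff.2 h0
  set u : ℕ → ℝ := fun n => K * r ^ 2 / ‖lam‖ * (c ^ 2 / ‖lam‖) ^ n
  have hu : Summable u :=
    (summable_geometric_of_lt_one (by positivity) ((div_lt_one hlam).2 hc)).mul_left _
  have hbound : ∀ n, ∀ z ∈ closedBall (0 : 𝕜) r,
      ‖(P (P^[n] z) - lam * P^[n] z) / lam ^ (n + 1)‖ ≤ u n := by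
    intro n z hz
    rw [mem_closedBall_zero_iff] at hz
    have hn := norm_iterate_le_pow_mul hc0 hc1 hPc hz n
    have hnr : ‖P^[n] z‖ ≤ c ^ n * r := hn.trans (by gcongr)
    have hn1 : ‖P^[n] z‖ ≤ r :=
      (hn.trans (mul_le_of_le_one_left (norm_nonneg z) (pow_le_one₀ hc0 hc1))).trans hz
    rw [norm_div, norm_pow, div_le_iff₀ (by positivity)]
    calc ‖P (P^[n] z) - lam * P^[n] z‖ ≤ K * ‖P^[n] z‖ ^ 2 := hPK _ hn1
      _ ≤ K * (c ^ n * r) ^ 2 := by gcongr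
      _ = u n * ‖lam‖ ^ (n + 1) := by
        simp only [u]; rw [div_pow, ← pow_mul, pow_succ]; field_simp; ring
  have hid : TendstoUniformlyOn (fun (_ : ℕ) (z : 𝕜) => z) id atTop (closedBall 0 r) :=
    fun _ hv => Eventually.of_forall fun _ _ _ => refl_mem_uniformity hv
  refine (hid.add (tendstoUniformlyOn_tsum_nat hu hbound)).congr (.of_forall fun n z _ => ?_)
  exact (iterate_div_pow_eq_add_sum h0 z n).symm

theorem eq_mul_of_tendsto_iterate_div_pow (h0 : lam ≠ 0) {z a b : 𝕜}
    (ha : Tendsto (fun n => P^[n] z / lam ^ n) atTop (𝓝 a))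
    (hb : Tendsto (fun n => P^[n] (P z) / lam ^ n) atTop (𝓝 b)) : b = lam * a := by
  refine tendsto_nhds_unique hb (((ha.comp (tendsto_add_atTop_nat 1)).const_mul lam).congr
    fun n => ?_)
  simp only [Function.comp_apply, ← Function.iterate_succ_apply, pow_succ]
  field_simp

theorem norm_mul_add_sq_le {lam w : 𝕜} {r : ℝ} (hw : ‖w‖ ≤ r) :
    ‖lam * w + w ^ 2‖ ≤ (‖lam‖ + r) * ‖w‖ :=
  calc ‖lam * w + w ^ 2‖ ≤ ‖lam‖ * ‖w‖ + ‖w‖ * ‖w‖ :=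
        (norm_add_le _ _).trans_eq (by rw [norm_mul, norm_pow, sq])
    _ ≤ (‖lam‖ + r) * ‖w‖ := by nlinarith [norm_nonneg w]

end Koenigs

theorem TendstoLocallyUniformlyOn.hasDerivAt {ι : Type*} {l : Filter ι} [l.NeBot]
    {F : ι → ℂ → ℂ} {φ : ℂ → ℂ} {U : Set ℂ} {x f' : ℂ} (hU : IsOpen U) (hx : x ∈ U)
    (hF : TendstoLocallyUniformlyOn F φ l U) (hFd : ∀ i, DifferentiableOn ℂ (F i) U)
    (hF' : ∀ i, HasDerivAt (F i) f' x) : HasDerivAt φ f' x := by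
  have hφ := (hF.differentiableOn (.of_forall hFd) hU).differentiableAt (hU.mem_nhds hx)
  have hlim := (hF.deriv (.of_forall hFd) hU).tendsto_at hx
  simp only [Function.comp_apply, fun i => (hF' i).deriv] at hlim
  rw [tendsto_nhds_unique tendsto_const_nhds hlim]
  exact hφ.hasDerivAt

theorem exists_pos_add_sq_lt {a : ℝ} (ha0 : 0 < a) (ha1 : a < 1) : ∃ r > 0, (a + r) ^ 2 < a :=
  ⟨(a - a ^ 2) / 3, by nlinarith, by nlinarith [mul_pos ha0 (sub_pos.2 ha1)]⟩

/-- Koenigs linearization for `P_λ(z) = λz + z²`, `0 < |λ| < 1`: there is a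
neighborhood `U` of `0` and a holomorphic `φ` with `φ(0) = 0`, `φ'(0) = 1`,
`φ ∘ P_λ = λ φ` on `U`, obtained as the locally uniform limit of `P_λⁿ(z)/λⁿ`
on a sufficiently small neighborhood of `0`. -/
theorem stmt13 (lam : ℂ) (h0 : lam ≠ 0) (h1 : ‖lam‖ < 1)
    (P : ℂ → ℂ) (hP : P = fun z => lam * z + z ^ 2) :
    ∃ U ∈ nhds (0 : ℂ), ∃ φ : ℂ → ℂ,
      DifferentiableOn ℂ φ U ∧ φ 0 = 0 ∧ HasDerivAt φ 1 0 ∧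
      (∀ z ∈ U, P z ∈ U → φ (P z) = lam * φ z) ∧
      ∃ V ∈ nhds (0 : ℂ), V ⊆ U ∧
        TendstoLocallyUniformlyOn (fun n z => P^[n] z / lam ^ n) φ atTop V := by
  subst hP
  obtain ⟨r, hr0, hr⟩ := exists_pos_add_sq_lt (norm_pos_iff.2 h0) h1
  have hc1 : ‖lam‖ + r ≤ 1 := by nlinarith [norm_nonneg lam]
  set F : ℕ → ℂ → ℂ := fun n z => (fun z => lam * z + z ^ 2)^[n] z / lam ^ n
  obtain ⟨φ, hFφ⟩ : ∃ φ, TendstoUniformlyOn F φ atTop (closedBall 0 r) :=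
    ⟨_, tendstoUniformlyOn_iterate_div_pow (K := 1) h0 zero_le_one (by positivity) hc1 hr
      (fun _ => norm_mul_add_sq_le) (fun w _ => by simp)⟩
  have hloc : TendstoLocallyUniformlyOn F φ atTop (ball 0 r) :=
    (hFφ.mono ball_subset_closedBall).tendstoLocallyUniformlyOn
  have hFd : ∀ n, DifferentiableOn ℂ (F n) (ball 0 r) := fun n =>
    ((Differentiable.iterate (by fun_prop) n).div_const _).differentiableOn
  have hF' : ∀ n, HasDerivAt (F n) 1 0 := fun n => by
    have hP' : HasDerivAt (fun z => lam * z + z ^ 2) lam 0 := by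
      simpa using ((hasDerivAt_id' (0 : ℂ)).const_mul lam).fun_add (hasDerivAt_pow 2 (0 : ℂ))
    simpa [pow_ne_zero n h0] using (hP'.iterate 0 (by simp) n).div_const (lam ^ n)
  have hF0 : ∀ n, F n 0 = 0 := fun n => by simp [F, Function.iterate_fixed]
  refine ⟨ball 0 r, ball_mem_nhds 0 hr0, φ, hloc.differentiableOn (.of_forall hFd) isOpen_ball,
    ?_, hloc.hasDerivAt isOpen_ball (mem_ball_self hr0) hFd hF',
    fun z hz hPz => eq_mul_of_tendsto_iterate_div_pow h0 (hloc.tendsto_at hz) (hloc.tendsto_at hPz),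
    ball 0 r, ball_mem_nhds 0 hr0, subset_rfl, hloc⟩
  exact tendsto_nhds_unique (hloc.tendsto_at (mem_ball_self hr0)) (by simp [hF0])
end
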